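/- Let R be a finite irreducible root system with highest root θ, α a long simple root, and y_α the minimal-length element with y_α(α) = θ. Then N(y_α⁻¹) = {β ∈ R⁺ : (β, α∨) = −1}. -/

import Mathlib

open scoped RealInnerProductSpace

/-- Geometric data of a (finite or affine) root system with a choice of
positive and simple roots, inside a real inner product space. -/
structure RootSystemData (V : Type*) [NormedAddCommGroup V] [InnerProductSpace ℝ V] where
  roots : Set V
  pos : Set V
  simples : Set V
  simples_sub : simples ⊆ pos
  pos_sub : pos ⊆ roots
  ne_zero : ∀ α ∈ roots, α ≠ (0 : V)
  eq_union : roots = pos ∪ (Neg.neg '' pos)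
  not_both : ∀ α ∈ pos, -α ∉ pos

namespace RootSystemData

variable {V : Type*} [NormedAddCommGroup V] [InnerProductSpace ℝ V]
  [FiniteDimensional ℝ V]

/-- The orthogonal reflection in the hyperplane orthogonal to `α`. -/
noncomputable def srefl (α : V) : V ≃ₗᵢ[ℝ] V := Submodule.reflection (ℝ ∙ α)ᗮ

variable (R : RootSystemData V)

/-- The root system data is geometric: simple reflections permute the
positive roots other than the corresponding simple root, and the set of
roots is stable under all reflections in roots. -/
structure IsGeometric : Prop where
  simple_perm : ∀ α ∈ R.simples, ∀ β ∈ R.pos, β ≠ α → srefl α β ∈ R.pos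
  refl_stable : ∀ α ∈ R.roots, ∀ β ∈ R.roots, srefl α β ∈ R.roots
  pos_comb : ∀ α ∈ R.pos, α ∈ AddSubmonoid.closure R.simples

/-- The Weyl group: the group generated by the simple reflections. -/
noncomputable def W : Subgroup (V ≃ₗᵢ[ℝ] V) :=
  Subgroup.closure {g | ∃ α ∈ R.simples, g = srefl α}

/-- The inversion set `N(w) = {α ∈ Δ⁺ ∣ w⁻¹ α ∈ -Δ⁺}`. -/
def N (w : V ≃ₗᵢ[ℝ] V) : Set V := {α | α ∈ R.pos ∧ w⁻¹ α ∈ Neg.neg '' R.pos}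

/-- `l` is a word in the simple reflections representing `w`. -/
noncomputable def IsWord (l : List V) (w : V ≃ₗᵢ[ℝ] V) : Prop :=
  (∀ α ∈ l, α ∈ R.simples) ∧ w = (l.map srefl).prod

/-- The length of `w` : the least length of a word in the simple reflections
representing `w`. -/
noncomputable def length (w : V ≃ₗᵢ[ℝ] V) : ℕ :=
  sInf {n | ∃ l : List V, R.IsWord l w ∧ l.length = n}

/-- A reduced expression. -/
noncomputable def IsReduced (l : List V) (w : V ≃ₗᵢ[ℝ] V) : Prop :=
  R.IsWord l w ∧ l.length = R.length w

/-- The (left) weak Bruhat order: some reduced expression of `w₁` is an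
initial segment of a reduced expression of `w₂`. -/
noncomputable def weakLE (w₁ w₂ : V ≃ₗᵢ[ℝ] V) : Prop :=
  ∃ l₁ l₂ : List V, R.IsReduced l₁ w₁ ∧ R.IsReduced (l₁ ++ l₂) w₂

end RootSystemData

open RootSystemData
open scoped RealInnerProductSpace

variable {V : Type*} [NormedAddCommGroup V] [InnerProductSpace ℝ V] [FiniteDimensional ℝ V]

/-!
Since `θ` is the highest root it is dominant, so `⟪θ, γ⟫ ≥ 0` for every positive root `γ`. As
`⟪θ, y β⟫ = ⟪α, β⟫`, a positive root `β` with `(β, α∨) = -1` is sent by `y` to a negative root.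
Conversely, if `y β` is negative then `(β, α∨) ≤ 0`. It is not `0`: otherwise `s_β` fixes `α`, and
the exchange condition makes `y s_β` a shorter element sending `α` to `θ`. It is not below `-1`
either: `α` is long, so that would force `β = -α`.
-/

namespace RootSystemData

section InnerProductSpace

variable {E : Type*} [NormedAddCommGroup E] [InnerProductSpace ℝ E]

theorem srefl_apply (γ x : E) : srefl γ x = x - (2 * ⟪γ, x⟫ / ‖γ‖ ^ 2) • γ := by
  rw [srefl, Submodule.reflection_orthogonal_apply, Submodule.reflection_singleton_apply]
  simp only [RCLike.ofReal_real_eq_id, id_eq, two_smul]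
  module

theorem srefl_self (γ : E) : srefl γ γ = -γ :=
  Submodule.reflection_orthogonalComplement_singleton_eq_neg γ

theorem srefl_of_inner_eq_zero {γ x : E} (h : ⟪γ, x⟫ = 0) : srefl γ x = x := by
  simp [srefl_apply, h]

theorem srefl_of_two_inner_eq_norm_sq {γ x : E} (h : 2 * ⟪γ, x⟫ = ‖γ‖ ^ 2) :
    srefl γ x = x - γ := by
  rcases eq_or_ne γ 0 with rfl | hγ
  · simp [srefl_apply]
  · rw [srefl_apply, h, div_self (by positivity), one_smul]

theorem srefl_srefl (γ x : E) : srefl γ (srefl γ x) = x :=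
  Submodule.reflection_reflection _ x

theorem srefl_inv (γ : E) : (srefl γ)⁻¹ = srefl γ :=
  Submodule.reflection_inv

theorem srefl_mul_self (γ : E) : srefl γ * srefl γ = 1 :=
  Submodule.reflection_mul_reflection _

theorem inner_srefl_self_right (γ x : E) : ⟪srefl γ x, γ⟫ = -⟪x, γ⟫ := by
  rw [← (srefl γ).inner_map_map (srefl γ x) γ, srefl_srefl, srefl_self, inner_neg_right]

theorem srefl_map (w : E ≃ₗᵢ[ℝ] E) (γ : E) : srefl (w γ) = w * srefl γ * w⁻¹ := by
  ext x
  obtain ⟨x, rfl⟩ := w.surjective x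
  simp only [LinearIsometryEquiv.coe_mul, Function.comp_apply, LinearIsometryEquiv.inv_def,
    LinearIsometryEquiv.symm_apply_apply, srefl_apply, map_sub, map_smul, w.norm_map,
    w.inner_map_map]

theorem list_prod_map_srefl_inv (l : List E) :
    (l.map srefl).prod⁻¹ = (l.reverse.map srefl).prod := by
  induction l with
  | nil => simp
  | cons γ t ih => simp [ih, srefl_inv]

theorem eq_of_norm_sq_le_inner {x y : E} (hx : ‖x‖ ^ 2 ≤ ⟪x, y⟫) (hy : ‖y‖ ^ 2 ≤ ⟪x, y⟫) :
    x = y := by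
  have h : ‖x - y‖ ^ 2 ≤ 0 := by rw [norm_sub_sq_real]; linarith
  rw [← sub_eq_zero, ← norm_eq_zero]
  exact pow_eq_zero_iff two_ne_zero |>.mp (le_antisymm h (sq_nonneg _))

theorem neg_one_le_of_two_inner_eq {x y : E} {n : ℤ} (hn : 2 * ⟪x, y⟫ = n * ‖x‖ ^ 2)
    (hyx : ‖y‖ ≤ ‖x‖) (hne : y ≠ -x) : -1 ≤ n := by
  by_contra! hlt
  have hn2 : (n : ℝ) ≤ -2 := by exact_mod_cast Int.le_sub_one_of_lt hlt
  have hyx2 : ‖-y‖ ^ 2 ≤ ‖x‖ ^ 2 := by rw [norm_neg]; gcongr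
  have hx : ‖x‖ ^ 2 ≤ ⟪x, -y⟫ := by rw [inner_neg_right]; nlinarith [sq_nonneg ‖x‖]
  exact hne (neg_eq_iff_eq_neg.mp (eq_of_norm_sq_le_inner hx (hyx2.trans hx)).symm)

theorem two_inner_eq_neg_norm_sq {x y : E} {n : ℤ} (hn : 2 * ⟪x, y⟫ = n * ‖x‖ ^ 2)
    (hneg : ⟪x, y⟫ < 0) (hyx : ‖y‖ ≤ ‖x‖) (hne : y ≠ -x) : 2 * ⟪x, y⟫ = -‖x‖ ^ 2 := by
  have hn0 : (n : ℝ) < 0 := by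
    by_contra! h
    nlinarith [sq_nonneg ‖x‖]
  obtain rfl : n = -1 := by
    have := neg_one_le_of_two_inner_eq hn hyx hne
    have : n < 0 := by exact_mod_cast hn0
    omega
  simpa using hn

theorem inner_smul_coroot_eq_neg_one_iff {x y : E} (hx : x ≠ 0) :
    ⟪y, (2 / ‖x‖ ^ 2) • x⟫ = -1 ↔ 2 * ⟪x, y⟫ = -‖x‖ ^ 2 := by
  rw [real_inner_smul_right, real_inner_comm, div_mul_eq_mul_div,
    div_eq_iff (by positivity), neg_one_mul]

theorem inner_nonneg_of_mem_closure {S : Set E} {u : E} (hu : ∀ s ∈ S, 0 ≤ ⟪u, s⟫) {x : E}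
    (hx : x ∈ AddSubmonoid.closure S) : 0 ≤ ⟪u, x⟫ := by
  induction hx using AddSubmonoid.closure_induction with
  | mem s hs => exact hu s hs
  | zero => simp
  | add a b _ _ ha hb => rw [inner_add_right]; positivity

theorem norm_sq_le_inner_of_two_inner_eq {x y : E} {m : ℤ} (hm : 2 * ⟪x, y⟫ = m * ‖x‖ ^ 2)
    (hpos : 0 < ⟪x, y⟫) (hne : 2 * ⟪x, y⟫ ≠ ‖x‖ ^ 2) : ‖x‖ ^ 2 ≤ ⟪x, y⟫ := by
  have hm0 : (0 : ℝ) < m := pos_of_mul_pos_left (hm ▸ by linarith) (sq_nonneg ‖x‖)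
  have hm1 : m ≠ 1 := by rintro rfl; exact hne (by simpa using hm)
  have hm2 : (2 : ℝ) ≤ m := by
    have : (0 : ℤ) < m := by exact_mod_cast hm0
    exact_mod_cast (by omega : (2 : ℤ) ≤ m)
  nlinarith [sq_nonneg ‖x‖]

end InnerProductSpace

variable {E : Type*} [NormedAddCommGroup E] [InnerProductSpace ℝ E] (R : RootSystemData E)

def IsCrystallographic : Prop :=
  ∀ α ∈ R.roots, ∀ β ∈ R.roots, ∃ n : ℤ, 2 * ⟪α, β⟫ / ⟪α, α⟫ = (n : ℝ)

variable {R}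

theorem neg_mem_roots {r : E} (hr : r ∈ R.roots) : -r ∈ R.roots := by
  rw [R.eq_union] at hr ⊢
  rcases hr with h | ⟨p, hp, rfl⟩
  · exact Or.inr ⟨r, h, rfl⟩
  · exact Or.inl (by simpa using hp)

theorem mem_pos_or_mem_neg {r : E} (hr : r ∈ R.roots) : r ∈ R.pos ∨ r ∈ Neg.neg '' R.pos := by
  rwa [R.eq_union] at hr

theorem notMem_neg_of_mem_pos {β : E} (hβ : β ∈ R.pos) : β ∉ Neg.neg '' R.pos := by
  rintro ⟨p, hp, rfl⟩
  exact R.not_both p hp hβ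

theorem norm_sq_pos_of_mem_roots {r : E} (hr : r ∈ R.roots) : 0 < ‖r‖ ^ 2 := by
  have := R.ne_zero r hr
  positivity

theorem IsCrystallographic.exists_two_inner_eq (hcrys : R.IsCrystallographic) {r r' : E}
    (hr : r ∈ R.roots) (hr' : r' ∈ R.roots) : ∃ n : ℤ, 2 * ⟪r, r'⟫ = n * ‖r‖ ^ 2 := by
  obtain ⟨n, hn⟩ := hcrys r hr r' hr'
  rw [real_inner_self_eq_norm_sq, div_eq_iff (norm_sq_pos_of_mem_roots hr).ne'] at hn
  exact ⟨n, hn⟩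

theorem IsGeometric.sub_mem_roots (hR : R.IsGeometric) (hcrys : R.IsCrystallographic) {r r' : E}
    (hr : r ∈ R.roots) (hr' : r' ∈ R.roots) (hinner : 0 < ⟪r, r'⟫) (hne : r ≠ r') :
    r - r' ∈ R.roots := by
  obtain ⟨m, hm⟩ := hcrys.exists_two_inner_eq hr hr'
  obtain ⟨m', hm'⟩ := hcrys.exists_two_inner_eq hr' hr
  by_cases h' : 2 * ⟪r', r⟫ = ‖r'‖ ^ 2
  · rw [← srefl_of_two_inner_eq_norm_sq h']
    exact hR.refl_stable r' hr' r hr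
  by_cases h : 2 * ⟪r, r'⟫ = ‖r‖ ^ 2
  · rw [← neg_sub, ← srefl_of_two_inner_eq_norm_sq h]
    exact neg_mem_roots (hR.refl_stable r hr r' hr')
  have hle' := norm_sq_le_inner_of_two_inner_eq hm' (real_inner_comm r r' ▸ hinner) h'
  rw [real_inner_comm] at hle'
  exact absurd (eq_of_norm_sq_le_inner (norm_sq_le_inner_of_two_inner_eq hm hinner h) hle') hne

theorem IsGeometric.map_mem_roots (hR : R.IsGeometric) {w : E ≃ₗᵢ[ℝ] E} (hw : w ∈ R.W)
    {r : E} (hr : r ∈ R.roots) : w r ∈ R.roots := by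
  induction hw using Subgroup.closure_induction'' generalizing r with
  | mem g hg =>
    obtain ⟨γ, hγ, rfl⟩ := hg
    exact hR.refl_stable γ (R.pos_sub (R.simples_sub hγ)) r hr
  | inv_mem g hg =>
    obtain ⟨γ, hγ, rfl⟩ := hg
    rw [srefl_inv]
    exact hR.refl_stable γ (R.pos_sub (R.simples_sub hγ)) r hr
  | one => exact hr
  | mul a b _ _ ha hb => exact ha (hb hr)

theorem IsGeometric.srefl_mem_pos_and_ne (hR : R.IsGeometric) {s β : E} (hs : s ∈ R.simples)
    (hβ : β ∈ R.pos) (hβs : β ≠ s) : srefl s β ∈ R.pos ∧ srefl s β ≠ s := by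
  refine ⟨hR.simple_perm s hs β hβ hβs, fun h => ?_⟩
  rw [← srefl_srefl s β, h, srefl_self] at hβ
  exact R.not_both s (R.simples_sub hs) hβ

/-- The sum `v` of the positive roots satisfies `⟪v, s⟫ = ‖s‖ ^ 2` for every simple root `s`,
because `srefl s` permutes the other positive roots. -/
theorem IsGeometric.exists_forall_simples_inner_pos (hR : R.IsGeometric) (hfin : R.roots.Finite) :
    ∃ v : E, ∀ s ∈ R.simples, 0 < ⟪v, s⟫ := by
  classical
  have hpf : R.pos.Finite := hfin.subset R.pos_sub
  refine ⟨∑ β ∈ hpf.toFinset, β, fun s hs => ?_⟩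
  have hsF : s ∈ hpf.toFinset := hpf.mem_toFinset.2 (R.simples_sub hs)
  have hrest : ∑ β ∈ hpf.toFinset.erase s, ⟪β, s⟫ = 0 := by
    refine Finset.sum_involution (fun β _ => srefl s β) (fun β _ => ?_) (fun β _ hβ h => ?_)
      (fun β hβ => ?_) (fun β _ => srefl_srefl s β)
    · rw [inner_srefl_self_right, add_neg_cancel]
    · exact hβ (by linarith [h ▸ inner_srefl_self_right s β])
    · obtain ⟨hβs, hβ⟩ := Finset.mem_erase.1 hβ
      obtain ⟨hpos, hne⟩ := hR.srefl_mem_pos_and_ne hs (hpf.mem_toFinset.1 hβ) hβs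
      exact Finset.mem_erase.2 ⟨hne, hpf.mem_toFinset.2 hpos⟩
  rw [sum_inner, ← Finset.add_sum_erase _ _ hsF, hrest, add_zero, real_inner_self_eq_norm_sq]
  exact norm_sq_pos_of_mem_roots (R.pos_sub (R.simples_sub hs))

theorem IsGeometric.neg_notMem_closure_simples (hR : R.IsGeometric) (hfin : R.roots.Finite)
    {s : E} (hs : s ∈ R.simples) : -s ∉ AddSubmonoid.closure R.simples := fun h => by
  obtain ⟨v, hv⟩ := hR.exists_forall_simples_inner_pos hfin
  have := inner_nonneg_of_mem_closure (fun t ht => (hv t ht).le) h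
  rw [inner_neg_right] at this
  linarith [hv s hs]

section HighestRoot

variable {θ : E} (hR : R.IsGeometric) (hfin : R.roots.Finite) (hcrys : R.IsCrystallographic)
  (hθpos : θ ∈ R.pos) (hθhigh : ∀ α ∈ R.roots, θ - α ∈ AddSubmonoid.closure R.simples)
include hR hfin hcrys hθpos hθhigh

/-- If `⟪θ, s⟫ < 0` then `θ + s` is a root, and `θ - (θ + s) = -s` is not a sum of simple roots. -/
theorem IsGeometric.inner_highest_nonneg_of_mem_simples {s : E} (hs : s ∈ R.simples) :
    0 ≤ ⟪θ, s⟫ := by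
  by_contra! hneg
  have hsr : s ∈ R.roots := R.pos_sub (R.simples_sub hs)
  have hne : θ ≠ -s := fun h => R.not_both s (R.simples_sub hs) (h ▸ hθpos)
  have hθs : θ - -s ∈ R.roots := hR.sub_mem_roots hcrys (R.pos_sub hθpos) (neg_mem_roots hsr)
    (by rw [inner_neg_right]; linarith) hne
  have := hθhigh _ hθs
  rw [sub_sub_cancel] at this
  exact hR.neg_notMem_closure_simples hfin hs this

theorem IsGeometric.inner_highest_nonneg_of_mem_pos {β : E} (hβ : β ∈ R.pos) : 0 ≤ ⟪θ, β⟫ :=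
  inner_nonneg_of_mem_closure
    (fun _ hs => hR.inner_highest_nonneg_of_mem_simples hfin hcrys hθpos hθhigh hs) (hR.pos_comb β hβ)

end HighestRoot

theorem IsWord.mem_W {l : List E} {w : E ≃ₗᵢ[ℝ] E} (hl : R.IsWord l w) : w ∈ R.W := by
  obtain ⟨hls, rfl⟩ := hl
  refine R.W.list_prod_mem fun g hg => ?_
  obtain ⟨γ, hγ, rfl⟩ := List.mem_map.1 hg
  exact Subgroup.subset_closure ⟨γ, hls γ hγ, rfl⟩

theorem exists_isWord {w : E ≃ₗᵢ[ℝ] E} (hw : w ∈ R.W) : ∃ l : List E, R.IsWord l w := by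
  induction hw using Subgroup.closure_induction with
  | mem g hg =>
    obtain ⟨γ, hγ, rfl⟩ := hg
    exact ⟨[γ], by simpa using hγ, by simp⟩
  | one => exact ⟨[], by simp, by simp⟩
  | mul a b _ _ ha hb =>
    obtain ⟨la, has, rfl⟩ := ha
    obtain ⟨lb, hbs, rfl⟩ := hb
    exact ⟨la ++ lb, fun x hx => (List.mem_append.1 hx).elim (has x) (hbs x), by simp⟩
  | inv a _ ha =>
    obtain ⟨l, hs, rfl⟩ := ha
    exact ⟨l.reverse, fun x hx => hs x (List.mem_reverse.1 hx), list_prod_map_srefl_inv l⟩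

theorem length_le_of_isWord {l : List E} {w : E ≃ₗᵢ[ℝ] E} (hl : R.IsWord l w) :
    R.length w ≤ l.length :=
  Nat.sInf_le ⟨l, hl, rfl⟩

theorem exists_isReduced {w : E ≃ₗᵢ[ℝ] E} (hw : w ∈ R.W) : ∃ l : List E, R.IsReduced l w := by
  obtain ⟨l, hl⟩ := exists_isWord hw
  exact Nat.sInf_mem (s := {n | ∃ l : List E, R.IsWord l w ∧ l.length = n})
    ⟨l.length, l, hl, rfl⟩

theorem IsGeometric.eq_of_srefl_mem_neg (hR : R.IsGeometric) {γ β : E} (hγ : γ ∈ R.simples)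
    (hβ : β ∈ R.pos) (h : srefl γ β ∈ Neg.neg '' R.pos) : β = γ := by
  by_contra hne
  exact notMem_neg_of_mem_pos (hR.simple_perm γ hγ β hβ hne) h

/-- The exchange condition. The deleted letter is the first `γ`, from the right, sending the
positive root `T β` to a negative one, `T` being the product of the letters to its right;
then `T β = γ`. -/
theorem IsGeometric.exists_isWord_mul_srefl (hR : R.IsGeometric) {β : E} (hβ : β ∈ R.pos)
    {l : List E} {w : E ≃ₗᵢ[ℝ] E} (hl : R.IsWord l w) (hwβ : w β ∈ Neg.neg '' R.pos) :
    ∃ l' : List E, R.IsWord l' (w * srefl β) ∧ l'.length + 1 = l.length := by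
  induction l generalizing w with
  | nil =>
    rw [hl.2] at hwβ
    exact absurd hwβ (notMem_neg_of_mem_pos hβ)
  | cons γ t ih =>
    obtain ⟨hls, rfl⟩ := hl
    have hγ : γ ∈ R.simples := hls γ List.mem_cons_self
    set T := (t.map srefl).prod
    have hT : R.IsWord t T := ⟨fun x hx => hls x (List.mem_cons_of_mem _ hx), rfl⟩
    by_cases hTβ : T β ∈ Neg.neg '' R.pos
    · obtain ⟨t', ht', hlen⟩ := ih hT hTβ
      refine ⟨γ :: t', ⟨List.forall_mem_cons.2 ⟨hγ, ht'.1⟩, ?_⟩, by simp [hlen]⟩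
      simp [T, ht'.2, mul_assoc]
    · have hTβpos : T β ∈ R.pos :=
        (mem_pos_or_mem_neg (hR.map_mem_roots hT.mem_W (R.pos_sub hβ))).resolve_right hTβ
      have heq : T β = γ := hR.eq_of_srefl_mem_neg hγ hTβpos hwβ
      refine ⟨t, ⟨hT.1, ?_⟩, by simp⟩
      rw [List.map_cons, List.prod_cons, ← heq, srefl_map, inv_mul_cancel_right, mul_assoc,
        srefl_mul_self, mul_one]

theorem IsGeometric.length_mul_srefl_lt (hR : R.IsGeometric) {w : E ≃ₗᵢ[ℝ] E} (hw : w ∈ R.W)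
    {β : E} (hβ : β ∈ R.pos) (hwβ : w β ∈ Neg.neg '' R.pos) :
    w * srefl β ∈ R.W ∧ R.length (w * srefl β) < R.length w := by
  obtain ⟨l, hl, hlen⟩ := exists_isReduced hw
  obtain ⟨l', hl', hlen'⟩ := hR.exists_isWord_mul_srefl hβ hl hwβ
  exact ⟨hl'.mem_W, by have := length_le_of_isWord hl'; omega⟩

theorem IsGeometric.inner_ne_zero_of_length_minimal (hR : R.IsGeometric) {y : E ≃ₗᵢ[ℝ] E}
    (hyW : y ∈ R.W) {α : E} (hymin : ∀ z ∈ R.W, z α = y α → R.length y ≤ R.length z) {β : E}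
    (hβ : β ∈ R.pos) (hyβ : y β ∈ Neg.neg '' R.pos) : ⟪α, β⟫ ≠ 0 := fun h0 => by
  obtain ⟨hzW, hlt⟩ := hR.length_mul_srefl_lt hyW hβ hyβ
  have hzα : (y * srefl β) α = y α := by
    rw [LinearIsometryEquiv.coe_mul, Function.comp_apply,
      srefl_of_inner_eq_zero (real_inner_comm α β ▸ h0)]
  exact absurd (hymin _ hzW hzα) (not_le.2 hlt)

end RootSystemData

theorem inversions_of_inverse_minimal_general (R : RootSystemData V) (hR : R.IsGeometric)
    (hfin : R.roots.Finite)
    (hcrys : ∀ α ∈ R.roots, ∀ β ∈ R.roots, ∃ n : ℤ, 2 * ⟪α, β⟫ / ⟪α, α⟫ = (n : ℝ))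
    (θ : V) (hθpos : θ ∈ R.pos)
    (hθhigh : ∀ α ∈ R.roots, θ - α ∈ AddSubmonoid.closure R.simples)
    (α : V) (hα : α ∈ R.simples) (hlong : ∀ β ∈ R.roots, ‖β‖ ≤ ‖α‖)
    (y : V ≃ₗᵢ[ℝ] V) (hy : y ∈ R.W ∧ y α = θ ∧
      ∀ z : V ≃ₗᵢ[ℝ] V, z ∈ R.W → z α = θ → R.length y ≤ R.length z) :
    R.N y⁻¹ = {β | β ∈ R.pos ∧ ⟪β, (2 / ‖α‖ ^ 2) • α⟫ = -1} := by
  obtain ⟨hyW, hyα, hymin⟩ := hy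
  have hαpos : α ∈ R.pos := R.simples_sub hα
  have hα0 : 0 < ‖α‖ ^ 2 := norm_sq_pos_of_mem_roots (R.pos_sub hαpos)
  have hθy : ∀ β, ⟪θ, y β⟫ = ⟪α, β⟫ := fun β => hyα ▸ y.inner_map_map α β
  have hdom : ∀ {γ}, γ ∈ R.pos → 0 ≤ ⟪θ, γ⟫ :=
    hR.inner_highest_nonneg_of_mem_pos hfin hcrys hθpos hθhigh
  ext β
  simp only [N, Set.mem_ofPred_eq, inv_inv,
    inner_smul_coroot_eq_neg_one_iff (R.ne_zero α (R.pos_sub hαpos))]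
  refine and_congr_right fun hβ => ⟨fun hyβ => ?_, fun hcoroot => ?_⟩
  · obtain ⟨n, hn⟩ :=
      IsCrystallographic.exists_two_inner_eq hcrys (R.pos_sub hαpos) (R.pos_sub hβ)
    have hle : ⟪α, β⟫ ≤ 0 := by
      obtain ⟨p, hp, hpβ⟩ := hyβ
      rw [← hθy, ← hpβ, inner_neg_right, neg_nonpos]
      exact hdom hp
    have hne : ⟪α, β⟫ ≠ 0 := hR.inner_ne_zero_of_length_minimal hyW
      (fun z hz hzα => hymin z hz (hzα.trans hyα)) hβ hyβ
    exact two_inner_eq_neg_norm_sq hn (hle.lt_of_ne hne) (hlong β (R.pos_sub hβ))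
      fun h => R.not_both α hαpos (h ▸ hβ)
  · exact (mem_pos_or_mem_neg (hR.map_mem_roots hyW (R.pos_sub hβ))).resolve_left
      fun h => by linarith [hdom h, hθy β]

/-- `N(y_α⁻¹) = {β ∈ R⁺ : (β, α∨) = −1}`. -/
theorem inversions_of_inverse_minimal (R : RootSystemData V) (hR : R.IsGeometric)
    (hfin : R.roots.Finite)
    (hcrys : ∀ α ∈ R.roots, ∀ β ∈ R.roots, ∃ n : ℤ, 2 * ⟪α, β⟫ / ⟪α, α⟫ = (n : ℝ))
    (hirr : ∀ S₁ S₂ : Set V, R.simples = S₁ ∪ S₂ →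
      (∀ a ∈ S₁, ∀ b ∈ S₂, ⟪a, b⟫ = 0) → S₁ = ∅ ∨ S₂ = ∅)
    (θ : V) (hθpos : θ ∈ R.pos)
    (hθhigh : ∀ α ∈ R.roots, θ - α ∈ AddSubmonoid.closure R.simples)
    (α : V) (hα : α ∈ R.simples) (hlong : ∀ β ∈ R.roots, ‖β‖ ≤ ‖α‖)
    (y : V ≃ₗᵢ[ℝ] V) (hy : y ∈ R.W ∧ y α = θ ∧
      ∀ z : V ≃ₗᵢ[ℝ] V, z ∈ R.W → z α = θ → R.length y ≤ R.length z) :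
    R.N y⁻¹ = {β | β ∈ R.pos ∧ ⟪β, (2 / ‖α‖ ^ 2) • α⟫ = -1} :=
  inversions_of_inverse_minimal_general R hR hfin hcrys θ hθpos hθhigh α hα hlong y hy
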